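/- arXiv:math/0110042 — 4 statements merged into one kernel-verified Lean document; each statement's English description precedes it below -/
import Mathlib

section
/- Let p, q'' ∈ ℤ and n ≥ 1, and let H = (ℤ × ℤ)/⟨(p, q'')⟩ be the quotient of ℤ² by the subgroup generated by (p, q''). Then there exists a group homomorphism ω : H → ℤ_n sending the class of (0,1) to 1 ∈ ℤ_n if and only if gcd(p, n) divides q''. -/
/-!
A homomorphism out of `ℤ² ⧸ ⟨(p, q'')⟩` is a choice of images `a`, `b` of the two generators
with `p • a + q'' • b = 0`. With `b = 1` in `ℤ_n` this asks for a solution of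
`p a ≡ -q'' (mod n)`, i.e. for `q''` to lie in the ideal `(p, n) = (gcd(p, n))` of `ℤ`.
-/

theorem exists_addMonoidHom_quotient_zmultiples_iff {A : Type*} [AddCommGroup A]
    (p q : ℤ) (b : A) :
    (∃ ω : (ℤ × ℤ) ⧸ AddSubgroup.zmultiples ((p, q) : ℤ × ℤ) →+ A,
      ω (QuotientAddGroup.mk (0, 1)) = b) ↔ ∃ a : A, p • a + q • b = 0 := by
  constructor
  · rintro ⟨ω, rfl⟩
    refine ⟨ω (QuotientAddGroup.mk (1, 0)), ?_⟩
    have hpq : ((p, q) : ℤ × ℤ) = p • (1, 0) + q • (0, 1) := by simp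
    rw [← map_zsmul, ← map_zsmul, ← map_add, ← QuotientAddGroup.mk_zsmul,
      ← QuotientAddGroup.mk_zsmul, ← QuotientAddGroup.mk_add, ← hpq,
      (QuotientAddGroup.eq_zero_iff _).2 (AddSubgroup.mem_zmultiples _), map_zero]
  · rintro ⟨a, ha⟩
    let φ : ℤ × ℤ →+ A := (zmultiplesHom A a).coprod (zmultiplesHom A b)
    have hker : AddSubgroup.zmultiples ((p, q) : ℤ × ℤ) ≤ φ.ker :=
      AddSubgroup.zmultiples_le.2 ha
    exact ⟨QuotientAddGroup.lift _ φ hker, by simp [φ]⟩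

theorem ZMod.exists_intCast_mul_add_eq_zero_iff (p q : ℤ) (n : ℕ) :
    (∃ a : ZMod n, (p : ZMod n) * a + q = 0) ↔ (Int.gcd p n : ℤ) ∣ q := by
  rw [Int.coe_gcd, gcd_dvd_iff_exists, ZMod.intCast_surjective.exists]
  simp only [← Int.cast_mul, ← Int.cast_add, ZMod.intCast_zmod_eq_zero_iff_dvd]
  constructor
  · rintro ⟨x, k, hk⟩
    exact ⟨-x, k, by linear_combination hk⟩
  · rintro ⟨x, y, rfl⟩
    exact ⟨-x, y, by ring⟩

theorem stmt1_general (p q'' : ℤ) (n : ℕ) :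
    (∃ ω : (ℤ × ℤ) ⧸ AddSubgroup.zmultiples ((p, q'') : ℤ × ℤ) →+ ZMod n,
      ω (QuotientAddGroup.mk ((0, 1) : ℤ × ℤ)) = 1) ↔ (Int.gcd p n : ℤ) ∣ q'' := by
  rw [exists_addMonoidHom_quotient_zmultiples_iff, ← ZMod.exists_intCast_mul_add_eq_zero_iff]
  simp only [zsmul_eq_mul, mul_one]

/-- Existence criterion for an `n`-fold strongly-cyclic branched covering of a
`(1,1)`-knot in `L(p,q)`: there is a monodromy
`ω : H₁ = (ℤ × ℤ)/⟨(p, q'')⟩ → ℤ_n` sending the meridian class (the class of `(0,1)`)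
to `1` if and only if `gcd(p, n)` divides `q''`. -/
theorem stmt1 (p q'' : ℤ) (n : ℕ) (hn : 1 ≤ n) :
    (∃ ω : (ℤ × ℤ) ⧸ AddSubgroup.zmultiples ((p, q'') : ℤ × ℤ) →+ ZMod n,
      ω (QuotientAddGroup.mk ((0, 1) : ℤ × ℤ)) = 1) ↔ (Int.gcd p n : ℤ) ∣ q'' :=
  stmt1_general p q'' n
end

section
/- Let F₃ be the free group on three generators a, b, c, and define endomorphisms of F₃ by: d_α : a ↦ a, b ↦ ab, c ↦ ac; d_β : a ↦ b⁻¹a, b ↦ b, c ↦ c; e_γ : a ↦ ac, b ↦ b, c ↦ c. Then for all natural numbers h and k, the composite endomorphism φ = d_α^h ∘ e_γ^k ∘ d_β^{1+k} ∘ d_α (applying d_α first) satisfies φ(b) = (b⁻¹a^{−h})^{1+k} · a · (a^h c)^k · a^h · b. -/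
/-! Each of `d_α`, `d_β`, `e_γ` fixes one generator and multiplies another by a fixed element, so its
powers act on that generator by multiplying with a power of the fixed element: `d_αʰ(b) = aʰb`,
`d_αʰ(c) = aʰc`, `d_βⁿ(a) = b⁻ⁿa`, `e_γᵏ(a) = acᵏ`. Pushing `d_α(b) = ab` through the composite with
these formulas gives the stated word. -/

namespace Monoid.End

variable {M : Type*} [Monoid M] {f : Monoid.End M} {x y : M}

theorem pow_apply_of_apply_eq_self (hx : f x = x) (n : ℕ) : (f ^ n) x = x := by
  rw [coe_pow]
  exact Function.iterate_fixed hx n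

theorem pow_apply_eq_pow_mul (hx : f x = x) (hy : f y = x * y) (n : ℕ) :
    (f ^ n) y = x ^ n * y := by
  induction n with
  | zero => simp
  | succ n ih =>
    rw [pow_succ, coe_mul, Function.comp_apply, hy, map_mul, pow_apply_of_apply_eq_self hx, ih,
      pow_succ', mul_assoc]

theorem pow_apply_eq_mul_pow (hx : f x = x) (hy : f y = y * x) (n : ℕ) :
    (f ^ n) y = y * x ^ n := by
  induction n with
  | zero => simp
  | succ n ih =>
    rw [pow_succ, coe_mul, Function.comp_apply, hy, map_mul, pow_apply_of_apply_eq_self hx, ih,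
      pow_succ, mul_assoc]

end Monoid.End

namespace Stmt5

/-- Generators `a = ᾱ`, `b = β̄`, `c = γ̄` of the free group `F₃`. -/
def a : FreeGroup (Fin 3) := FreeGroup.of 0
def b : FreeGroup (Fin 3) := FreeGroup.of 1
def c : FreeGroup (Fin 3) := FreeGroup.of 2

/-- The endomorphism `d_α : a ↦ a, b ↦ ab, c ↦ ac`. -/
def dAlpha : Monoid.End (FreeGroup (Fin 3)) := FreeGroup.lift ![a, a * b, a * c]
/-- The endomorphism `d_β : a ↦ b⁻¹a, b ↦ b, c ↦ c`. -/
def dBeta : Monoid.End (FreeGroup (Fin 3)) := FreeGroup.lift ![b⁻¹ * a, b, c]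
/-- The endomorphism `e_γ = d_γ⁻¹ : a ↦ ac, b ↦ b, c ↦ c`. -/
def eGamma : Monoid.End (FreeGroup (Fin 3)) := FreeGroup.lift ![a * c, b, c]

theorem dAlpha_a : dAlpha a = a := FreeGroup.lift_apply_of
theorem dAlpha_b : dAlpha b = a * b := FreeGroup.lift_apply_of
theorem dAlpha_c : dAlpha c = a * c := FreeGroup.lift_apply_of
theorem dBeta_a : dBeta a = b⁻¹ * a := FreeGroup.lift_apply_of
theorem dBeta_b : dBeta b = b := FreeGroup.lift_apply_of
theorem eGamma_a : eGamma a = a * c := FreeGroup.lift_apply_of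
theorem eGamma_b : eGamma b = b := FreeGroup.lift_apply_of
theorem eGamma_c : eGamma c = c := FreeGroup.lift_apply_of

open Monoid.End

/-- For `φ = d_α^h ∘ e_γ^k ∘ d_β^{1+k} ∘ d_α` (applying `d_α` first),
`φ(b) = (b⁻¹a^{−h})^{1+k} · a · (a^h c)^k · a^h · b`. -/
theorem stmt5 (h k : ℕ) :
    (dAlpha ^ h * eGamma ^ k * dBeta ^ (1 + k) * dAlpha) b =
      (b⁻¹ * (a ^ h)⁻¹) ^ (1 + k) * a * (a ^ h * c) ^ k * a ^ h * b := by
  have dAlpha_pow_b := pow_apply_eq_pow_mul dAlpha_a dAlpha_b h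
  have dAlpha_pow_c := pow_apply_eq_pow_mul dAlpha_a dAlpha_c h
  have dBeta_pow_a :=
    pow_apply_eq_pow_mul (by rw [map_inv, dBeta_b]) dBeta_a (1 + k)
  have eGamma_pow_a := pow_apply_eq_mul_pow eGamma_c eGamma_a k
  simp only [coe_mul, Function.comp_apply, dAlpha_b, map_mul, map_pow, map_inv, dBeta_pow_a,
    pow_apply_of_apply_eq_self dBeta_b, eGamma_pow_a, pow_apply_of_apply_eq_self eGamma_b,
    pow_apply_of_apply_eq_self dAlpha_a, dAlpha_pow_b, dAlpha_pow_c, mul_inv_rev, mul_assoc]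

end Stmt5
end

section
/- Let n ≥ 1 and h, k ≥ 1, and let F_n be the free group on generators x_i indexed by i ∈ ℤ_n. Let W = (∏_{j=0}^{hk} x_{1−jk}) · (∏_{i=0}^{k−1} ∏_{l=0}^{h−1} x_{2+i−(h(k−i)−l)k}^{−1}) and w = (∏_{j=0}^{h(k−1)} x_{1−jk}) · (∏_{i=0}^{k−2} ∏_{l=1}^{h} x_{2+i−(h(k−1−i)+1−l)k}^{−1}), with all subscripts reduced mod n. Then the cyclically presented groups G_n(W) and G_n(w) are isomorphic. -/
/-!
`W` is the conjugate `A B A⁻¹` of its middle part `B` by the product `A` of its first `h`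
letters, and `w = θ^{hk}(B)`. Conjugating the relator, or applying a power of `θ` to it, does
not change the normal closure of the set of relators `θ^j(·)`: in the first case each relator is
replaced by a conjugate, in the second the relators are only permuted because `θ^n = 1`.
-/

namespace Stmt11

/-- The shift automorphism `θ_n` of the free group on generators indexed by `ZMod n`,
determined by `x_i ↦ x_{i+1}`. -/
def theta (n : ℕ) : Monoid.End (FreeGroup (ZMod n)) :=
  FreeGroup.lift (fun i => FreeGroup.of (i + 1))

/-- The set of relators `{w, θ_n(w), …, θ_n^{n-1}(w)}` of the cyclic presentation `G_n(w)`. -/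
def cyclicRels (n : ℕ) (w : FreeGroup (ZMod n)) : Set (FreeGroup (ZMod n)) :=
  { r | ∃ j : ℕ, j < n ∧ r = (theta n ^ j) w }

/-- The cyclically presented group `G_n(w)`. -/
abbrev G (n : ℕ) (w : FreeGroup (ZMod n)) : Type :=
  PresentedGroup (cyclicRels n w)

/-- The generator `x_m` of `F_n`, with subscript `m ∈ ℤ` reduced mod `n`. -/
def gen (n : ℕ) (m : ℤ) : FreeGroup (ZMod n) := FreeGroup.of (m : ZMod n)

/-- `W = (∏_{j=0}^{hk} x_{1−jk}) · (∏_{i=0}^{k−1} ∏_{l=0}^{h−1} x_{2+i−(h(k−i)−l)k}⁻¹)`,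
the products being taken in order. -/
def bigW (n h k : ℕ) : FreeGroup (ZMod n) :=
  ((List.range (h * k + 1)).map (fun j => gen n (1 - (j : ℤ) * k))).prod *
    ((List.range k).map (fun i =>
      (((List.range h).map (fun l =>
        (gen n (2 + (i : ℤ) - ((h : ℤ) * ((k : ℤ) - i) - l) * k))⁻¹)).prod))).prod

/-- `w = (∏_{j=0}^{h(k−1)} x_{1−jk}) · (∏_{i=0}^{k−2} ∏_{l=1}^{h} x_{2+i−(h(k−1−i)+1−l)k}⁻¹)`,
the products being taken in order. -/
def smallw (n h k : ℕ) : FreeGroup (ZMod n) :=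
  ((List.range (h * (k - 1) + 1)).map (fun j => gen n (1 - (j : ℤ) * k))).prod *
    ((List.range (k - 1)).map (fun i =>
      (((List.range h).map (fun l =>
        (gen n (2 + (i : ℤ) -
          ((h : ℤ) * ((k : ℤ) - 1 - i) + 1 - ((l : ℤ) + 1)) * k))⁻¹)).prod))).prod

theorem normalClosure_le_of_forall_isConj {H : Type*} [Group H] {s t : Set H}
    (h : ∀ x ∈ s, ∃ y ∈ t, IsConj y x) :
    Subgroup.normalClosure s ≤ Subgroup.normalClosure t :=
  Subgroup.normalClosure_le_normal fun x hx =>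
    let ⟨y, hy, hyx⟩ := h x hx
    Subgroup.conjugatesOfSet_subset_normalClosure (Group.mem_conjugatesOfSet_iff.2 ⟨y, hy, hyx⟩)

theorem List.prod_map_range_inv {H : Type*} [Group H] (f : ℕ → H) (m : ℕ) :
    ((List.range m).map f).prod⁻¹ = ((List.range m).map fun l => (f (m - 1 - l))⁻¹).prod := by
  rw [List.prod_inv_reverse, List.map_map, ← List.map_reverse, List.range_eq_range',
    List.reverse_range', List.map_map, ← List.range_eq_range']
  simp only [Function.comp_def, zero_add]

section

variable {n : ℕ}

theorem theta_pow_add_apply (i j : ℕ) (x : FreeGroup (ZMod n)) :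
    (theta n ^ (i + j)) x = (theta n ^ i) ((theta n ^ j) x) := by
  rw [pow_add]
  rfl

theorem theta_of (a : ZMod n) : theta n (FreeGroup.of a) = FreeGroup.of (a + 1) :=
  FreeGroup.lift_apply_of

theorem theta_pow_of (s : ℕ) (a : ZMod n) :
    (theta n ^ s) (FreeGroup.of a) = FreeGroup.of (a + s) := by
  induction s generalizing a with
  | zero => simp
  | succ s ih =>
    rw [theta_pow_add_apply, pow_one, theta_of, ih, Nat.cast_succ, add_assoc, add_comm 1]

theorem theta_pow_gen (s : ℕ) (m : ℤ) : (theta n ^ s) (gen n m) = gen n (m + s) := by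
  rw [gen, theta_pow_of, gen]
  push_cast
  rfl

theorem theta_pow_self : theta n ^ n = 1 :=
  FreeGroup.ext_hom (theta n ^ n) (1 : Monoid.End _) fun a =>
    (theta_pow_of n a).trans (by rw [ZMod.natCast_self, add_zero]; rfl)

theorem cyclicRels_eq_range (hn : 0 < n) (w : FreeGroup (ZMod n)) :
    cyclicRels n w = Set.range fun j : ℕ => (theta n ^ j) w := by
  ext r
  constructor
  · rintro ⟨j, -, rfl⟩
    exact ⟨j, rfl⟩
  · rintro ⟨j, rfl⟩
    exact ⟨j % n, Nat.mod_lt j hn, by rw [← pow_eq_pow_mod j theta_pow_self]⟩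

theorem cyclicRels_theta_pow (s : ℕ) (w : FreeGroup (ZMod n)) :
    cyclicRels n ((theta n ^ s) w) = cyclicRels n w := by
  rcases Nat.eq_zero_or_pos n with rfl | hn
  · simp [cyclicRels]
  rw [cyclicRels_eq_range hn, cyclicRels_eq_range hn]
  ext r
  constructor
  · rintro ⟨j, rfl⟩
    exact ⟨j + s, theta_pow_add_apply j s w⟩
  · rintro ⟨j, rfl⟩
    -- `θ^(n s) = 1`, so shifting back by `s` is shifting forward by `(n - 1) s`.
    refine ⟨j + (n - 1) * s, ?_⟩
    dsimp only
    rw [← theta_pow_add_apply, add_assoc, ← Nat.add_one_mul, Nat.sub_add_cancel hn,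
      pow_add, pow_mul, theta_pow_self, one_pow, mul_one]

theorem normalClosure_cyclicRels_conj (a w : FreeGroup (ZMod n)) :
    Subgroup.normalClosure (cyclicRels n (a * w * a⁻¹)) =
      Subgroup.normalClosure (cyclicRels n w) := by
  have key : ∀ j, IsConj ((theta n ^ j) w) ((theta n ^ j) (a * w * a⁻¹)) := fun j =>
    isConj_iff.2 ⟨(theta n ^ j) a, by simp only [map_mul, map_inv]⟩
  apply le_antisymm <;> apply normalClosure_le_of_forall_isConj <;> rintro _ ⟨j, hj, rfl⟩
  · exact ⟨_, ⟨j, hj, rfl⟩, key j⟩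
  · exact ⟨_, ⟨j, hj, rfl⟩, (key j).symm⟩

def conjEquiv (a w : FreeGroup (ZMod n)) : G n (a * w * a⁻¹) ≃* G n w :=
  QuotientGroup.quotientMulEquivOfEq (normalClosure_cyclicRels_conj a w)

def thetaPowEquiv (s : ℕ) (w : FreeGroup (ZMod n)) : G n ((theta n ^ s) w) ≃* G n w :=
  QuotientGroup.quotientMulEquivOfEq (by rw [cyclicRels_theta_pow])

end

section

variable (n h k : ℕ)

def headWord : FreeGroup (ZMod n) :=
  ((List.range h).map fun j : ℕ => gen n (1 - j * k)).prod

def coreWord : FreeGroup (ZMod n) :=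
  ((List.range (h * (k - 1) + 1)).map fun j : ℕ => gen n (1 - (h + j) * k)).prod *
    ((List.range (k - 1)).map fun i : ℕ =>
      ((List.range h).map fun l : ℕ => (gen n (2 + i - (h * (k - i) - l) * k))⁻¹).prod).prod

theorem bigW_eq_conj (hk : 1 ≤ k) :
    bigW n h k = headWord n h k * coreWord n h k * (headWord n h k)⁻¹ := by
  obtain ⟨k, rfl⟩ := Nat.exists_eq_add_of_le' hk
  -- The ranges in `bigW` are coerced to `List ℤ` through the list monad.
  simp only [bigW, coreWord, bind_pure_comp, List.map_eq_map, List.map_map, Function.comp_def,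
    Nat.add_sub_cancel]
  rw [show h * (k + 1) + 1 = h + (h * k + 1) by ring, List.range_add, List.map_append,
    List.prod_append, List.map_map, List.prod_range_succ _ k]
  simp only [mul_assoc]
  refine congrArg (headWord n h (k + 1) * ·) (congrArg₂ (· * ·) ?_ (congrArg (_ * ·) ?_))
  · refine congrArg List.prod (List.map_congr_left fun j _ => congrArg (gen n) ?_)
    push_cast
    ring
  · rw [headWord, List.prod_map_range_inv]
    refine congrArg List.prod
      (List.map_congr_left fun l hl => congrArg (fun m => (gen n m)⁻¹) ?_)
    rw [Nat.sub_sub, Nat.cast_sub (by simp at hl; omega)]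
    push_cast
    ring

theorem smallw_eq_theta_pow_coreWord : smallw n h k = (theta n ^ (h * k)) (coreWord n h k) := by
  simp only [smallw, coreWord, bind_pure_comp, List.map_eq_map, List.map_map, Function.comp_def,
    map_mul, map_list_prod, map_inv, theta_pow_gen]
  congr 1
  · refine congrArg List.prod (List.map_congr_left fun j _ => congrArg (gen n) ?_)
    push_cast
    ring
  · refine congrArg List.prod (List.map_congr_left fun i _ => congrArg List.prod
      (List.map_congr_left fun l _ => congrArg (fun m => (gen n m)⁻¹) ?_))
    push_cast
    ring

end

theorem stmt11_general (n h k : ℕ) (hk : 1 ≤ k) :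
    Nonempty (G n (bigW n h k) ≃* G n (smallw n h k)) := by
  rw [bigW_eq_conj n h k hk, smallw_eq_theta_pow_coreWord]
  exact ⟨(conjEquiv _ _).trans (thetaPowEquiv _ _).symm⟩

/-- The cyclically presented groups `G_n(W)` and `G_n(w)` are isomorphic. -/
theorem stmt11 (n h k : ℕ) (hn : 1 ≤ n) (hh : 1 ≤ h) (hk : 1 ≤ k) :
    Nonempty (G n (bigW n h k) ≃* G n (smallw n h k)) :=
  stmt11_general n h k hk

end Stmt11
end

section
/- The abelianization of the cyclically presented group G₄(x₄x₁³x₂x₁⁻¹) (indices mod 4) is isomorphic to ℤ × ℤ_4. -/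
/-!
Abelianizing the cyclic presentation, `w = x₄x₁³x₂x₁⁻¹` becomes `a₀ + 2a₁ + a₂` (indices mod 4), so
the group is generated by `a₀, …, a₃` subject to `aᵢ + 2aᵢ₊₁ + aᵢ₊₂ = 0`. Putting `v = a₁` and
`u = a₀ + a₁`, the relations give `4u = 0`, `a₀ = u - v`, `a₂ = 3u - v` and `a₃ = 2u + v`, and
conversely these values satisfy all four relations for any `v` and any `u` of order dividing 4.
Hence `v ↦ (1, 0)`, `u ↦ (0, 1)` is an isomorphism onto `ℤ × ℤ₄`.
-/

namespace Stmt14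

/-- The shift automorphism `θ_n` of the free group on generators indexed by `ZMod n`,
determined by `x_i ↦ x_{i+1}`. -/
def theta (n : ℕ) : Monoid.End (FreeGroup (ZMod n)) :=
  FreeGroup.lift (fun i => FreeGroup.of (i + 1))

/-- The set of relators `{w, θ_n(w), …, θ_n^{n-1}(w)}` of the cyclic presentation `G_n(w)`. -/
def cyclicRels (n : ℕ) (w : FreeGroup (ZMod n)) : Set (FreeGroup (ZMod n)) :=
  { r | ∃ j : ℕ, j < n ∧ r = (theta n ^ j) w }

/-- The cyclically presented group `G_n(w)`. -/
abbrev G (n : ℕ) (w : FreeGroup (ZMod n)) : Type :=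
  PresentedGroup (cyclicRels n w)

/-- The generator `x_i` of the free group on `ZMod 4`. -/
def x (i : ZMod 4) : FreeGroup (ZMod 4) := FreeGroup.of i

theorem theta_apply_of (n : ℕ) (i : ZMod n) : theta n (FreeGroup.of i) = FreeGroup.of (i + 1) :=
  FreeGroup.lift_apply_of

theorem theta_pow_apply_of (n j : ℕ) (i : ZMod n) :
    (theta n ^ j) (FreeGroup.of i) = FreeGroup.of (i + j) := by
  induction j with
  | zero => simp
  | succ j ih =>
    rw [pow_succ', Monoid.End.coe_mul, Function.comp_apply, ih, theta_apply_of]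
    push_cast
    ring_nf

abbrev relator : FreeGroup (ZMod 4) := x 4 * x 1 ^ 3 * x 2 * (x 1)⁻¹

abbrev Ab : Type := Abelianization (G 4 relator)

theorem lift_theta_pow_relator {H : Type*} [CommGroup H] (g : ZMod 4 → H) (j : ℕ) :
    FreeGroup.lift g ((theta 4 ^ j) relator) = g j * g (j + 1) ^ 2 * g (j + 2) := by
  have h4 : (4 : ZMod 4) = 0 := rfl
  simp only [relator, x, map_mul, map_pow, map_inv, theta_pow_apply_of, FreeGroup.lift_apply_of,
    h4, zero_add, add_comm (1 : ZMod 4), add_comm (2 : ZMod 4)]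
  rw [mul_inv_eq_iff_eq_mul, pow_succ]
  ac_rfl

section CirculantRelations

variable {M : Type*} [AddCommGroup M] {a : ZMod 4 → M}

theorem four_smul_add_eq_zero (ha : ∀ i, a i + 2 • a (i + 1) + a (i + 2) = 0) :
    4 • (a 0 + a 1) = 0 := by
  have h₀ : a 0 + 2 • a 1 + a 2 = 0 := ha 0
  have h₁ : a 1 + 2 • a 2 + a 3 = 0 := ha 1
  have h₂ : a 2 + 2 • a 3 + a 0 = 0 := ha 2
  linear_combination (norm := module) 3 • h₀ - 2 • h₁ + h₂

theorem eq_three_smul_add_sub (ha : ∀ i, a i + 2 • a (i + 1) + a (i + 2) = 0) :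
    a 2 = 3 • (a 0 + a 1) - a 1 := by
  have h₀ : a 0 + 2 • a 1 + a 2 = 0 := ha 0
  linear_combination (norm := module) h₀ - four_smul_add_eq_zero ha

theorem eq_two_smul_add_add (ha : ∀ i, a i + 2 • a (i + 1) + a (i + 2) = 0) :
    a 3 = 2 • (a 0 + a 1) + a 1 := by
  have h₁ : a 1 + 2 • a 2 + a 3 = 0 := ha 1
  linear_combination (norm := module)
    h₁ - 2 • eq_three_smul_add_sub ha - 2 • four_smul_add_eq_zero ha

end CirculantRelations

namespace Ab

def gen (i : ZMod 4) : Additive Ab := Additive.ofMul (Abelianization.of (PresentedGroup.of i))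

def lift {M : Type*} [AddCommGroup M] (a : ZMod 4 → M)
    (ha : ∀ i, a i + 2 • a (i + 1) + a (i + 2) = 0) : Additive Ab →+ M :=
  MonoidHom.toAdditiveLeft <| Abelianization.lift <| PresentedGroup.toGroup
    (f := Multiplicative.ofAdd ∘ a) <| by
      rintro r ⟨j, -, rfl⟩
      rw [lift_theta_pow_relator]
      exact congrArg Multiplicative.ofAdd (ha j)

theorem lift_gen {M : Type*} [AddCommGroup M] (a : ZMod 4 → M)
    (ha : ∀ i, a i + 2 • a (i + 1) + a (i + 2) = 0) (i : ZMod 4) : lift a ha (gen i) = a i := by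
  simp [lift, gen, PresentedGroup.toGroup.of]

theorem hom_ext {M : Type*} [AddCommGroup M] {f g : Additive Ab →+ M}
    (h : ∀ i, f (gen i) = g (gen i)) : f = g :=
  Additive.addMonoidHom_ext _ _ <| Abelianization.hom_ext _ _ <| PresentedGroup.ext h

theorem gen_relation (i : ZMod 4) : gen i + 2 • gen (i + 1) + gen (i + 2) = 0 := by
  obtain ⟨j, hj, rfl⟩ : ∃ j : ℕ, j < 4 ∧ (j : ZMod 4) = i :=
    ⟨i.val, i.val_lt, ZMod.natCast_zmod_val i⟩
  have h := congrArg Abelianization.of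
    (PresentedGroup.one_of_mem (rels := cyclicRels 4 relator) ⟨j, hj, rfl⟩)
  rw [map_one, ← MonoidHom.comp_apply, FreeGroup.lift_unique _ (fun _ => rfl),
    lift_theta_pow_relator] at h
  exact congrArg Additive.ofMul h

end Ab

def prodGen : ZMod 4 → ℤ × ZMod 4 := ![(-1, 1), (1, 0), (-1, 3), (1, 2)]

theorem prodGen_relation (i : ZMod 4) :
    prodGen i + 2 • prodGen (i + 1) + prodGen (i + 2) = 0 := by
  fin_cases i <;> rfl

namespace Ab

def toProd : Additive Ab →+ ℤ × ZMod 4 := lift prodGen prodGen_relation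

theorem toProd_gen (i : ZMod 4) : toProd (gen i) = prodGen i :=
  lift_gen _ _ i

def ofProd : ℤ × ZMod 4 →+ Additive Ab :=
  (zmultiplesHom _ (gen 1)).coprod <|
    ZMod.lift 4 ⟨zmultiplesHom _ (gen 0 + gen 1), by
      rw [zmultiplesHom_apply, natCast_zsmul]
      exact four_smul_add_eq_zero gen_relation⟩

theorem ofProd_apply (n k : ℤ) : ofProd (n, k) = n • gen 1 + k • (gen 0 + gen 1) := by
  simp [ofProd]

theorem ofProd_prodGen (i : ZMod 4) : ofProd (prodGen i) = gen i := by
  fin_cases i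
  · show ofProd ((-1 : ℤ), ((1 : ℤ) : ZMod 4)) = gen 0
    rw [ofProd_apply]
    module
  · show ofProd ((1 : ℤ), ((0 : ℤ) : ZMod 4)) = gen 1
    rw [ofProd_apply]
    module
  · show ofProd ((-1 : ℤ), ((3 : ℤ) : ZMod 4)) = gen 2
    rw [ofProd_apply, eq_three_smul_add_sub gen_relation]
    module
  · show ofProd ((1 : ℤ), ((2 : ℤ) : ZMod 4)) = gen 3
    rw [ofProd_apply, eq_two_smul_add_add gen_relation]
    module

theorem toProd_ofProd (p : ℤ × ZMod 4) : toProd (ofProd p) = p := by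
  obtain ⟨n, k⟩ := p
  obtain ⟨k, rfl⟩ := ZMod.intCast_surjective k
  simp [ofProd_apply, toProd_gen, prodGen]

def equivProd : Additive Ab ≃+ ℤ × ZMod 4 :=
  AddMonoidHom.toAddEquiv toProd ofProd
    (hom_ext fun i => by
      rw [AddMonoidHom.comp_apply, toProd_gen, ofProd_prodGen, AddMonoidHom.id_apply])
    (AddMonoidHom.ext toProd_ofProd)

end Ab

/-- The abelianization of `G₄(x₄x₁³x₂x₁⁻¹)` (the first homology of the corresponding
4-fold strongly-cyclic branched covering) is `ℤ × ℤ_4`. -/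
theorem stmt14 :
    Nonempty (Abelianization (G 4 (x 4 * x 1 ^ 3 * x 2 * (x 1)⁻¹)) ≃*
      Multiplicative (ℤ × ZMod 4)) :=
  ⟨AddEquiv.toMultiplicativeRight Ab.equivProd⟩

end Stmt14
end
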